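/- arXiv:1910.11638 — 4 statements merged into one kernel-verified Lean document; each statement's English description precedes it below -/
import Mathlib

section
/- In a convex quadrilateral Q = xyzw in the plane, if the interior angle at x plus the interior angle at y is at most π, then at least one of x, y is an endpoint of a diameter of Q (i.e., some pair of vertices of Q at maximal mutual distance includes x or y). -/
/-!
The diagonals cross, so the interior angles of the quadrilateral sum to `2π`, and the angles at
`z` and `w` sum to at least `π`. One of them is therefore at least `π / 2`, and the law of cosines
makes the side `zw` no longer than the diagonal `xz` or `yw`. Among the six distances between
vertices, whose maximum is the diameter of the hull, the largest can thus be taken with an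
endpoint at `x` or `y`.
-/

open EuclideanGeometry Metric Set

noncomputable section

abbrev E2 := EuclideanSpace ℝ (Fin 2)

open Real

section PseudoMetric

variable {α : Type*} [PseudoMetricSpace α]

theorem IsCompact.exists_dist_eq_diam {s : Set α} (hs : IsCompact s) (hne : s.Nonempty) :
    ∃ a ∈ s, ∃ b ∈ s, dist a b = diam s := by
  obtain ⟨⟨a, b⟩, ⟨ha, hb⟩, hmax⟩ :=
    (hs.prod hs).exists_isMaxOn (hne.prod hne) continuous_dist.continuousOn
  refine ⟨a, ha, b, hb, le_antisymm (dist_le_diam_of_mem hs.isBounded ha hb) ?_⟩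
  exact diam_le_of_forall_dist_le dist_nonneg fun u hu v hv => hmax (mk_mem_prod hu hv)

theorem dist_le_dist_of_mem_pair {z w a b : α} (ha : a ∈ ({z, w} : Set α))
    (hb : b ∈ ({z, w} : Set α)) : dist a b ≤ dist z w := by
  rcases ha with rfl | rfl <;> rcases hb with rfl | rfl <;> simp [dist_comm]

theorem exists_dist_eq_diam_of_dist_le_or_dist_le {x y z w : α}
    (h : dist z w ≤ dist x z ∨ dist z w ≤ dist y w) :
    ∃ p ∈ ({x, y, z, w} : Set α),
      dist x p = diam ({x, y, z, w} : Set α) ∨ dist y p = diam ({x, y, z, w} : Set α) := by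
  set S : Set α := {x, y, z, w}
  have hS : IsCompact S := (toFinite S).isCompact
  have hle : ∀ a ∈ S, ∀ b ∈ S, dist a b ≤ diam S := fun a ha b hb =>
    dist_le_diam_of_mem hS.isBounded ha hb
  obtain ⟨a, haS, b, hbS, hab⟩ := hS.exists_dist_eq_diam (insert_nonempty _ _)
  rcases haS with rfl | rfl | ha
  · exact ⟨b, hbS, Or.inl hab⟩
  · exact ⟨b, hbS, Or.inr hab⟩
  rcases hbS with rfl | rfl | hb
  · exact ⟨a, .inr (.inr ha), Or.inl (dist_comm a b ▸ hab)⟩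
  · exact ⟨a, .inr (.inr ha), Or.inr (dist_comm a b ▸ hab)⟩
  have hzw : diam S ≤ dist z w := hab ▸ dist_le_dist_of_mem_pair ha hb
  rcases h with h | h
  · refine ⟨z, ?_, Or.inl (le_antisymm (hle x ?_ z ?_) (hzw.trans h))⟩ <;> simp [S]
  · refine ⟨w, ?_, Or.inr (le_antisymm (hle y ?_ w ?_) (hzw.trans h))⟩ <;> simp [S]

end PseudoMetric

theorem sbtw_of_mem_openSegment {E : Type*} [AddCommGroup E] [Module ℝ E] {x y z : E}
    (h : y ∈ openSegment ℝ x z) (hxz : x ≠ z) : Sbtw ℝ x y z :=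
  ⟨mem_segment_iff_wbtw.1 (openSegment_subset_segment ℝ x z h),
    fun hyx => hxz (left_mem_openSegment_iff.1 (hyx ▸ h)),
    fun hyz => hxz (right_mem_openSegment_iff.1 (hyz ▸ h))⟩

section Euclidean

variable {V P : Type*} [NormedAddCommGroup V] [InnerProductSpace ℝ V] [MetricSpace P]
  [NormedAddTorsor V P]

theorem dist_le_dist_of_pi_div_two_le_angle {a b c : P} (h : π / 2 ≤ ∠ a b c) :
    dist a b ≤ dist a c := by
  have hcos : cos (∠ a b c) ≤ 0 :=
    cos_nonpos_of_pi_div_two_le_of_le h (by linarith [angle_le_pi a b c, pi_pos])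
  have hsq : dist a b * dist a b ≤ dist a c * dist a c := by
    nlinarith [law_cos a b c, mul_nonneg (mul_nonneg (dist_nonneg (x := a) (y := b))
      (dist_nonneg (x := c) (y := b))) (neg_nonneg.2 hcos)]
  exact (mul_self_le_mul_self_iff dist_nonneg dist_nonneg).2 hsq

theorem dist_le_dist_or_dist_le_of_pi_le_angle_add_angle {x y z w : P}
    (h : π ≤ ∠ y z w + ∠ z w x) : dist z w ≤ dist x z ∨ dist z w ≤ dist y w := by
  rcases le_or_gt (π / 2) (∠ z w x) with hw | hw
  · left
    rw [dist_comm x z]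
    exact dist_le_dist_of_pi_div_two_le_angle hw
  · right
    rw [dist_comm z w, dist_comm y w]
    exact dist_le_dist_of_pi_div_two_le_angle (by linarith [angle_comm y z w])

/-- The diagonal `xz` cuts the quadrilateral into the triangles `xyz` and `zwx`; since it meets
the diagonal `yw`, it also splits the angles at `x` and `z`. -/
theorem angle_add_angle_add_angle_add_angle_eq_two_pi {x y z w p : P} (hxpz : Sbtw ℝ x p z)
    (hypw : Sbtw ℝ y p w) (hxy : x ≠ y) (hzw : z ≠ w) :
    ∠ w x y + ∠ x y z + ∠ y z w + ∠ z w x = 2 * π := by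
  have hx : ∠ w x z + ∠ z x y = ∠ w x y := angle_add_angle_eq_of_sbtw_of_sameRay hypw.symm
    hxpz.wbtw.sameRay_vsub_left hxpz.left_ne_right.symm
  have hz : ∠ y z x + ∠ x z w = ∠ y z w := angle_add_angle_eq_of_sbtw_of_sameRay hypw
    hxpz.symm.wbtw.sameRay_vsub_left hxpz.left_ne_right
  have hxyz := angle_add_angle_add_angle_eq_pi z hxy.symm
  have hzwx := angle_add_angle_add_angle_eq_pi x hzw.symm
  linarith

end Euclidean

theorem diametral_of_angle_sum_le_pi_quadrilateral_general
    (x y z w : E2)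
    (hdiag : (openSegment ℝ x z ∩ openSegment ℝ y w).Nonempty)
    (h₁ : ¬ Collinear ℝ ({x, y, z} : Set E2))
    (h₂ : ¬ Collinear ℝ ({y, z, w} : Set E2))
    (hang : ∠ w x y + ∠ x y z ≤ Real.pi) :
    ∃ p ∈ convexHull ℝ ({x, y, z, w} : Set E2),
      dist x p = Metric.diam (convexHull ℝ ({x, y, z, w} : Set E2)) ∨
      dist y p = Metric.diam (convexHull ℝ ({x, y, z, w} : Set E2)) := by
  obtain ⟨p, hpxz, hpyw⟩ := hdiag
  have hxpz : Sbtw ℝ x p z := sbtw_of_mem_openSegment hpxz (ne₁₃_of_not_collinear h₁)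
  have hypw : Sbtw ℝ y p w := sbtw_of_mem_openSegment hpyw (ne₁₃_of_not_collinear h₂)
  have hsum := angle_add_angle_add_angle_add_angle_eq_two_pi hxpz hypw
    (ne₁₂_of_not_collinear h₁) (ne₂₃_of_not_collinear h₂)
  have hangle : π ≤ ∠ y z w + ∠ z w x := by linarith
  obtain ⟨q, hq, hdiam⟩ := exists_dist_eq_diam_of_dist_le_or_dist_le
    (dist_le_dist_or_dist_le_of_pi_le_angle_add_angle hangle)
  exact ⟨q, subset_convexHull ℝ _ hq, by rwa [convexHull_diam]⟩

/-- In a convex quadrilateral `Q = xyzw` (vertices in convex position in this cyclic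
order, so the diagonals `xz` and `yw` cross), if the interior angle at `x` plus the
interior angle at `y` is at most `π`, then `x` or `y` is an endpoint of a diameter
of `Q`. -/
theorem diametral_of_angle_sum_le_pi_quadrilateral
    (x y z w : E2)
    (hdiag : (openSegment ℝ x z ∩ openSegment ℝ y w).Nonempty)
    (h₁ : ¬ Collinear ℝ ({x, y, z} : Set E2))
    (h₂ : ¬ Collinear ℝ ({y, z, w} : Set E2))
    (h₃ : ¬ Collinear ℝ ({z, w, x} : Set E2))
    (h₄ : ¬ Collinear ℝ ({w, x, y} : Set E2))
    (hang : ∠ w x y + ∠ x y z ≤ Real.pi) :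
    ∃ p ∈ convexHull ℝ ({x, y, z, w} : Set E2),
      dist x p = Metric.diam (convexHull ℝ ({x, y, z, w} : Set E2)) ∨
      dist y p = Metric.diam (convexHull ℝ ({x, y, z, w} : Set E2)) :=
  diametral_of_angle_sum_le_pi_quadrilateral_general x y z w hdiag h₁ h₂ hang
end
end

section
/- Let K be a compact convex set with nonempty interior in ℝ², and let x be a boundary point of K at which the interior angle of K is at most π/3. Then x is a diametral point of K: there exists y ∈ K with ‖x − y‖ equal to the diameter of K. -/
/-! By the law of cosines, the side of a triangle opposite an angle of at most `π/3` is no longer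
than the longer of the two other sides. So `dist a b ≤ max (dist a x) (dist b x)` for all
`a, b ∈ K`, and a point of `K` farthest from `x` realises the diameter. -/

open EuclideanGeometry Metric Set

noncomputable section

/-- The interior angle of a planar convex body `K` at a boundary point `x`:
the angle measure of the tangent cone of `K` at `x`, i.e. the supremum of the
angles `∠ a x b` over points `a, b` of `K` distinct from `x`. -/
noncomputable def interiorAngle (K : Set E2) (x : E2) : ℝ :=
  sSup {θ : ℝ | ∃ a ∈ K, ∃ b ∈ K, a ≠ x ∧ b ≠ x ∧ θ = ∠ a x b}

theorem EuclideanGeometry.dist_le_max_of_angle_le_pi_div_three {V P : Type*}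
    [NormedAddCommGroup V] [InnerProductSpace ℝ V] [MetricSpace P] [NormedAddTorsor V P]
    {a x b : P} (h : ∠ a x b ≤ Real.pi / 3) :
    dist a b ≤ max (dist a x) (dist b x) := by
  set s := dist a x
  set t := dist b x
  have hs : 0 ≤ s := dist_nonneg
  have ht : 0 ≤ t := dist_nonneg
  have hcos : 1 / 2 ≤ Real.cos (∠ a x b) := by
    rw [← Real.cos_pi_div_three]
    exact Real.cos_le_cos_of_nonneg_of_le_pi (angle_nonneg a x b)
      (by linarith [Real.pi_pos]) h
  have hsq : dist a b ^ 2 ≤ s ^ 2 + t ^ 2 - s * t := by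
    nlinarith [law_cos a x b, mul_nonneg hs ht]
  have hmax : s ^ 2 + t ^ 2 - s * t ≤ max s t ^ 2 := by
    rcases le_total s t with hle | hle
    · rw [max_eq_right hle]; nlinarith
    · rw [max_eq_left hle]; nlinarith
  exact le_of_sq_le_sq (hsq.trans hmax) (le_max_of_le_left hs)

theorem angle_le_interiorAngle {K : Set E2} {x a b : E2} (ha : a ∈ K) (hb : b ∈ K)
    (hax : a ≠ x) (hbx : b ≠ x) : ∠ a x b ≤ interiorAngle K x := by
  refine le_csSup ⟨Real.pi, ?_⟩ ⟨a, ha, b, hb, hax, hbx, rfl⟩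
  rintro θ ⟨a, -, b, -, -, -, rfl⟩
  exact angle_le_pi a x b

theorem dist_le_max_of_interiorAngle_le_pi_div_three {K : Set E2} {x a b : E2}
    (hang : interiorAngle K x ≤ Real.pi / 3) (ha : a ∈ K) (hb : b ∈ K) :
    dist a b ≤ max (dist a x) (dist b x) := by
  rcases eq_or_ne a x with rfl | hax
  · exact (dist_comm a b).le.trans (le_max_right _ _)
  rcases eq_or_ne b x with rfl | hbx
  · exact le_max_left _ _
  exact dist_le_max_of_angle_le_pi_div_three
    ((angle_le_interiorAngle ha hb hax hbx).trans hang)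

theorem IsCompact.exists_dist_eq_diam_of_dist_le_max {X : Type*} [PseudoMetricSpace X]
    {K : Set X} (hK : IsCompact K) {x : X} (hx : x ∈ K)
    (h : ∀ a ∈ K, ∀ b ∈ K, dist a b ≤ max (dist a x) (dist b x)) :
    ∃ y ∈ K, dist x y = diam K := by
  obtain ⟨y, hyK, hy⟩ :=
    hK.exists_isMaxOn ⟨x, hx⟩ (continuous_id.dist continuous_const).continuousOn
  refine ⟨y, hyK, le_antisymm (dist_le_diam_of_mem hK.isBounded hx hyK) ?_⟩
  refine diam_le_of_forall_dist_le dist_nonneg fun a ha b hb => (h a ha b hb).trans ?_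
  rw [dist_comm x y]
  exact max_le (hy ha) (hy hb)

theorem diametral_of_angle_le_pi_div_three_general
    (K : Set E2) (hcomp : IsCompact K)
    (x : E2) (hx : x ∈ frontier K)
    (hang : interiorAngle K x ≤ Real.pi / 3) :
    ∃ y ∈ K, dist x y = Metric.diam K :=
  hcomp.exists_dist_eq_diam_of_dist_le_max (hcomp.isClosed.frontier_subset hx)
    fun _ ha _ hb => dist_le_max_of_interiorAngle_le_pi_div_three hang ha hb

/-- Any boundary point of a planar convex body at which the interior angle is at
most `π/3` is a diametral point. -/
theorem diametral_of_angle_le_pi_div_three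
    (K : Set E2) (hcomp : IsCompact K) (hconv : Convex ℝ K)
    (hint : (interior K).Nonempty)
    (x : E2) (hx : x ∈ frontier K)
    (hang : interiorAngle K x ≤ Real.pi / 3) :
    ∃ y ∈ K, dist x y = Metric.diam K :=
  diametral_of_angle_le_pi_div_three_general K hcomp x hx hang
end
end

section
/- Let K be a planar convex body symmetric about the origin, and let x be a boundary point of K with interior angle at most 5π/12. Then the segment from x to −x is a diameter of K, i.e., ‖x − (−x)‖ = 2‖x‖ equals the diameter of K. -/
open EuclideanGeometry Metric Set
open scoped RealInnerProductSpace

noncomputable section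

/-- If a planar convex body `K`, symmetric about the origin, has a boundary point
`x` with interior angle at most `5π/12`, then the segment from `x` to `-x` is a
diameter of `K`. -/
theorem antipodal_diameter_of_angle_le
    (K : Set E2) (hcomp : IsCompact K) (hconv : Convex ℝ K)
    (hint : (interior K).Nonempty)
    (hsym : ∀ z : E2, z ∈ K ↔ -z ∈ K)
    (x : E2) (hx : x ∈ frontier K)
    (hang : interiorAngle K x ≤ 5 * Real.pi / 12) :
    dist x (-x) = Metric.diam K := by
  have hKclosed : IsClosed K := hcomp.isClosed
  have hxK : x ∈ K := by
    have h1 : x ∈ closure K := frontier_subset_closure hx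
    rwa [hKclosed.closure_eq] at h1
  -- x has maximal norm in K
  have hmax : ∀ z ∈ K, ‖z‖ ≤ ‖x‖ := by
    intro z hz
    by_contra hlt
    push_neg at hlt
    have hz' : -z ∈ K := (hsym z).1 hz
    have hzx : z ≠ x := by
      rintro rfl; exact lt_irrefl _ hlt
    have hnzx : -z ≠ x := by
      intro he
      have : ‖z‖ ≤ ‖x‖ := by rw [← he, norm_neg]
      linarith
    set θ := ∠ z x (-z) with hθ
    have hmem : θ ∈ {θ : ℝ | ∃ a ∈ K, ∃ b ∈ K, a ≠ x ∧ b ≠ x ∧ θ = ∠ a x b} :=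
      ⟨z, hz, -z, hz', hzx, hnzx, rfl⟩
    have hbdd : BddAbove {θ : ℝ | ∃ a ∈ K, ∃ b ∈ K, a ≠ x ∧ b ≠ x ∧ θ = ∠ a x b} := by
      refine ⟨Real.pi, ?_⟩
      rintro t ⟨a, -, b, -, -, -, rfl⟩
      exact EuclideanGeometry.angle_le_pi a x b
    have hθle : θ ≤ 5 * Real.pi / 12 := le_trans (le_csSup hbdd hmem) hang
    -- the angle is obtuse
    have hinner : (inner ℝ (z - x) (-z - x) : ℝ) = ‖x‖ ^ 2 - ‖z‖ ^ 2 := by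
      have h1 : (inner ℝ (z - x) (-z - x) : ℝ) =
          (inner ℝ z (-z) : ℝ) - (inner ℝ z x : ℝ) - (inner ℝ x (-z) : ℝ) + (inner ℝ x x : ℝ) := by
        rw [inner_sub_left, inner_sub_right, inner_sub_right]; ring
      rw [h1, inner_neg_right, inner_neg_right, real_inner_self_eq_norm_sq,
        real_inner_self_eq_norm_sq, real_inner_comm x z]
      ring
    have hcos : Real.cos θ < 0 := by
      have hne1 : z - x ≠ 0 := sub_ne_zero.mpr hzx
      have hne2 : -z - x ≠ 0 := sub_ne_zero.mpr hnzx
      have hθdef : θ = InnerProductGeometry.angle (z - x) (-z - x) := by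
        rw [hθ, EuclideanGeometry.angle, vsub_eq_sub, vsub_eq_sub]
      rw [hθdef, InnerProductGeometry.cos_angle]
      apply div_neg_of_neg_of_pos
      · rw [hinner]
        have : ‖x‖ ^ 2 < ‖z‖ ^ 2 := by
          apply pow_lt_pow_left₀ hlt (norm_nonneg _)
          norm_num
        linarith
      · exact mul_pos (norm_pos_iff.mpr hne1) (norm_pos_iff.mpr hne2)
    have hgt : Real.pi / 2 < θ := by
      by_contra hle
      push_neg at hle
      have h0 : 0 ≤ θ := EuclideanGeometry.angle_nonneg _ _ _
      have : 0 ≤ Real.cos θ := Real.cos_nonneg_of_mem_Icc ⟨by linarith [Real.pi_pos], hle⟩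
      linarith
    have hpi := Real.pi_pos
    linarith
  have hdx : dist x (-x) = 2 * ‖x‖ := by
    rw [dist_eq_norm, sub_neg_eq_add, ← two_smul ℝ x, norm_smul]
    simp
  apply le_antisymm
  · exact Metric.dist_le_diam_of_mem hcomp.isBounded hxK ((hsym x).1 hxK)
  · apply Metric.diam_le_of_forall_dist_le dist_nonneg
    intro a ha b hb
    have h1 : dist a b ≤ ‖a‖ + ‖b‖ := by
      rw [dist_eq_norm]; exact norm_sub_le a b
    have h2 := hmax a ha
    have h3 := hmax b hb
    rw [hdx]
    linarith

end
end

section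
/- In a convex quadrilateral xyzw in the plane, if the diagonal segments xz and yw are both strictly shorter than the side zw, then the interior angle at w is strictly less than the angle ∠wxz and the interior angle at z is strictly less than the angle ∠wyz. -/
open EuclideanGeometry Metric Set

noncomputable section

theorem quadrilateral_angle_lt_of_short_diagonals_general
    (x y z w : E2)
    (h₂ : ¬ Collinear ℝ ({y, z, w} : Set E2))
    (h₃ : ¬ Collinear ℝ ({z, w, x} : Set E2))
    (hxz : dist x z < dist z w) (hyw : dist y w < dist z w) :
    ∠ z w x < ∠ w x z ∧ ∠ y z w < ∠ w y z := by
  have hzxw : ¬ Collinear ℝ ({z, x, w} : Set E2) := by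
    rwa [Set.pair_comm]
  have hwyz : ¬ Collinear ℝ ({w, y, z} : Set E2) := by
    rwa [Set.insert_comm, Set.pair_comm]
  constructor
  · rw [angle_comm w x z, angle_lt_iff_dist_lt hzxw]
    rwa [dist_comm z x]
  · rw [angle_comm y z w, angle_lt_iff_dist_lt hwyz]
    rwa [dist_comm w y, dist_comm w z]

/-- In a convex quadrilateral `xyzw` (vertices in convex position in this cyclic
order, so the diagonals `xz` and `yw` cross), if both diagonals `xz` and `yw`
are strictly shorter than the side `zw`, then the interior angle at `w` is
strictly less than `∠ w x z` and the interior angle at `z` is strictly less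
than `∠ w y z`. -/
theorem quadrilateral_angle_lt_of_short_diagonals
    (x y z w : E2)
    (hdiag : (openSegment ℝ x z ∩ openSegment ℝ y w).Nonempty)
    (h₁ : ¬ Collinear ℝ ({x, y, z} : Set E2))
    (h₂ : ¬ Collinear ℝ ({y, z, w} : Set E2))
    (h₃ : ¬ Collinear ℝ ({z, w, x} : Set E2))
    (h₄ : ¬ Collinear ℝ ({w, x, y} : Set E2))
    (hxz : dist x z < dist z w) (hyw : dist y w < dist z w) :
    ∠ z w x < ∠ w x z ∧ ∠ y z w < ∠ w y z :=
  quadrilateral_angle_lt_of_short_diagonals_general x y z w h₂ h₃ hxz hyw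
end
end
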